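/- Pironio's affine hull theorem: for any correlation scenario S = (I, M, O), the affine span of the finite set P_NS(S) equals the affine span of NS(S), and both have affine dimension D = ∑_{∅ ≠ V ⊆ I} ∏_{i ∈ V} ( ∑_{x_i ∈ M_i} (|O_{x_i}| − 1) ), where the sum runs over all nonempty subsets V of the party set I. -/

import Mathlib

open scoped Classical
open MeasureTheory

noncomputable section

/-- A correlation scenario `S = (I, M, O)`: a finite set `I` of parties, for each party `i`
a finite nonempty set `M i` of inputs, and for each input `x : M i` a finite set `O i x`
of outputs with at least two elements. -/
structure Scenario where
  I : Type
  M : I → Type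
  O : (i : I) → M i → Type
  fI : Fintype I
  fM : ∀ i, Fintype (M i)
  fO : ∀ i x, Fintype (O i x)
  hM : ∀ i, Nonempty (M i)
  hO : ∀ i x, 2 ≤ Fintype.card (O i x)

attribute [instance] Scenario.fI Scenario.fM Scenario.fO Scenario.hM

instance Scenario.instNonemptyO (S : Scenario) (i : S.I) (x : S.M i) : Nonempty (S.O i x) :=
  Fintype.card_pos_iff.mp (by have := S.hO i x; omega)

/-- Input strings of a scenario. -/
abbrev InputString (S : Scenario) := ∀ i, S.M i

/-- Output strings for a given input string. -/
abbrev OutputString (S : Scenario) (x : InputString S) := ∀ i, S.O i (x i)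

/-- The ambient real vector space with one coordinate `℘(a|x)` for each pair of an input
string `x` and an output string `a`. -/
abbrev Behaviour (S : Scenario) := (x : InputString S) → OutputString S x → ℝ

/-- `p` is a behaviour: each `p x` is a probability distribution on output strings. -/
def IsBehaviour (S : Scenario) (p : Behaviour S) : Prop :=
  (∀ x a, 0 ≤ p x a) ∧ ∀ x, ∑ a, p x a = 1

/-- The marginal `℘(a_V | x)` of a behaviour on the set `V` of parties, evaluated at the
restriction of `a` to `V`. -/
def marg (S : Scenario) (p : Behaviour S) (x : InputString S) (V : Set S.I)
    (a : OutputString S x) : ℝ :=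
  ∑ b : OutputString S x, if ∀ i ∈ V, b i = a i then p x b else 0

/-- No-signalling: replacing the input of party `i` (all other inputs fixed) leaves the
marginal on `I ∖ {i}` unchanged. -/
def NoSignalling (S : Scenario) (p : Behaviour S) : Prop :=
  ∀ (i : S.I) (x : InputString S) (m : S.M i)
    (a : OutputString S x) (a' : OutputString S (Function.update x i m)),
    (∀ j, j ≠ i → HEq (a j) (a' j)) →
    marg S p x {i}ᶜ a = marg S p (Function.update x i m) {i}ᶜ a'

/-- The set `NS(S)` of no-signalling behaviours. -/
def NSset (S : Scenario) : Set (Behaviour S) :=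
  {p | IsBehaviour S p ∧ NoSignalling S p}

/-- A behaviour is predictable if all its probabilities are `0` or `1`. -/
def Predictable (S : Scenario) (p : Behaviour S) : Prop :=
  ∀ x a, p x a = 0 ∨ p x a = 1

/-- The set `P_NS(S)` of predictable no-signalling behaviours. -/
def PNS (S : Scenario) : Set (Behaviour S) :=
  {p | IsBehaviour S p ∧ NoSignalling S p ∧ Predictable S p}

/-- The Bell-local polytope `B(S) = conv(P_NS(S))`. -/
def BellSet (S : Scenario) : Set (Behaviour S) :=
  convexHull ℝ (PNS S)

/-- `F_x = {i : x i ∈ M' i}`, the context-dependent set of parties choosing an input in the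
distinguished collection `M'`. -/
def Fup (S : Scenario) (M' : ∀ i, Set (S.M i)) (x : InputString S) : Set S.I :=
  {i | x i ∈ M' i}

/-- Partial predictability w.r.t. the collection `M'`: every marginal on a subset of `F_x`
is `{0,1}`-valued. -/
def PartPredictable (S : Scenario) (M' : ∀ i, Set (S.M i)) (p : Behaviour S) : Prop :=
  ∀ (x : InputString S) (V : Set S.I), V ⊆ Fup S M' x →
    ∀ a, marg S p x V a = 0 ∨ marg S p x V a = 1

/-- The set `PP(S, M')` of behaviours partially predictable w.r.t. `M'`. -/
def PPset (S : Scenario) (M' : ∀ i, Set (S.M i)) : Set (Behaviour S) :=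
  {p | IsBehaviour S p ∧ PartPredictable S M' p}

/-- The set `PP_NS(S, M')` of partially predictable no-signalling behaviours. -/
def PPNS (S : Scenario) (M' : ∀ i, Set (S.M i)) : Set (Behaviour S) :=
  {p | IsBehaviour S p ∧ NoSignalling S p ∧ PartPredictable S M' p}

/-- The partially deterministic polytope `PD(S, M') = conv(PP_NS(S, M'))`. -/
def PD (S : Scenario) (M' : ∀ i, Set (S.M i)) : Set (Behaviour S) :=
  convexHull ℝ (PPNS S M')

/-- The restricted scenario `S_{|M'}`: parties `{i : M' i ≠ ∅}`, input sets `M' i`, same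
output sets. -/
def Scenario.restrict (S : Scenario) (M' : ∀ i, Set (S.M i)) : Scenario where
  I := {i : S.I // (M' i).Nonempty}
  M := fun i => ↥(M' i.1)
  O := fun i x => S.O i.1 x.1
  fI := Subtype.fintype _
  fM := fun i => (Set.toFinite (M' i.1)).fintype
  fO := fun i x => S.fO i.1 x.1
  hM := fun i => i.2.to_subtype
  hO := fun i x => S.hO i.1 x.1

/-- A bipartition `(S_{|M'}, S_{|M'^⊥})` is nonredundant unless `M'` is everything or nothing. -/
def Nonredundant (S : Scenario) (M' : ∀ i, Set (S.M i)) : Prop :=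
  ¬ (∀ i, M' i = Set.univ) ∧ ¬ (∀ i, M' i = (∅ : Set (S.M i)))

/-- Extension of an input string of `S` to an input string of the restricted scenario
`S_{|M'}` (choosing arbitrary inputs for the parties `i` with `x i ∉ M' i`). -/
def extendInput (S : Scenario) (M' : ∀ i, Set (S.M i)) (x : InputString S) :
    InputString (S.restrict M') :=
  fun i => if h : x i.1 ∈ M' i.1 then ⟨x i.1, h⟩ else ⟨i.2.some, i.2.some_mem⟩

/-- Extension of an output string of `S` to an output string of the restricted scenario
`S_{|M'}` at the extended input string. -/
def extendOutput (S : Scenario) (M' : ∀ i, Set (S.M i)) (x : InputString S)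
    (a : OutputString S x) : OutputString (S.restrict M') (extendInput S M' x) :=
  fun i =>
    if h : x i.1 ∈ M' i.1 then
      cast (congrArg (S.O i.1)
        (show x i.1 = (extendInput S M' x i).1 by first | (unfold extendInput; simp [h]) | (simp only [extendInput, Scenario.restrict, dif_pos h]) | (unfold extendInput; exact (congrArg Subtype.val (dif_pos h)).symm)))
        (a i.1)
    else Classical.arbitrary _

/-- The behaviour product `℘' ⊙ ℘'^⊥` of behaviours on the two halves `S' = S_{|M'}` and
`S'^⊥ = S_{|M'^⊥}` of a disjoint bipartition of `S`:
`(℘'⊙℘'^⊥)(a|x) = ℘'(a_{F_x}|x_{F_x}) · ℘'^⊥(a_{I∖F_x}|x_{I∖F_x})`, the factors being the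
corresponding marginals (well defined for no-signalling behaviours). -/
def bprod (S : Scenario) (M' : ∀ i, Set (S.M i))
    (p' : Behaviour (S.restrict M'))
    (p'' : Behaviour (S.restrict fun i => (M' i)ᶜ)) :
    Behaviour S :=
  fun x a =>
    marg (S.restrict M') p' (extendInput S M' x)
        {i : (S.restrict M').I | x i.1 ∈ M' i.1} (extendOutput S M' x a) *
    marg (S.restrict fun i => (M' i)ᶜ) p'' (extendInput S (fun i => (M' i)ᶜ) x)
        {i : (S.restrict fun i => (M' i)ᶜ).I | x i.1 ∈ (M' i.1)ᶜ}
        (extendOutput S (fun i => (M' i)ᶜ) x a)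

/-- The product `K' ⊙ K''` of two sets of behaviours on the halves of a bipartition. -/
def bprodSet (S : Scenario) (M' : ∀ i, Set (S.M i))
    (K' : Set (Behaviour (S.restrict M')))
    (K'' : Set (Behaviour (S.restrict fun i => (M' i)ᶜ))) :
    Set (Behaviour S) :=
  Set.image2 (bprod S M') K' K''

end
section Pironio
open Finset

variable {S : Scenario}

universe u
lemma eq_iff_of_heq {α β : Sort u} (h : α = β) {u₁ v₁ : α} {u₂ v₂ : β}
    (hu : HEq u₁ u₂) (hv : HEq v₁ v₂) : (u₁ = v₁) ↔ (u₂ = v₂) := by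
  subst h; rw [eq_of_heq hu, eq_of_heq hv]

lemma ite_inst {α : Sort*} {P : Prop} {h1 h2 : Decidable P} {r s : α} :
    @ite _ P h1 r s = @ite _ P h2 r s := by
  rw [Subsingleton.elim h1 h2]

lemma ite_cond_congr' {α : Sort*} {P Q : Prop} {h1 : Decidable P} {h2 : Decidable Q}
    (h : P ↔ Q) (r s : α) : @ite _ P h1 r s = @ite _ Q h2 r s := by
  by_cases hP : P
  · rw [if_pos hP, if_pos (h.mp hP)]
  · rw [if_neg hP, if_neg (fun hQ => hP (h.mpr hQ))]

lemma marg_congr {p : Behaviour S} {x : InputString S} {V : Set S.I}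
    {a a' : OutputString S x} (h : ∀ i ∈ V, a i = a' i) :
    marg S p x V a = marg S p x V a' := by
  unfold marg
  refine Finset.sum_congr rfl fun b _ => ?_
  refine if_congr ?_ rfl rfl
  exact ⟨fun hb i hi => (hb i hi).trans (h i hi), fun hb i hi => (hb i hi).trans (h i hi).symm⟩

lemma marg_smul (c : ℝ) (p : Behaviour S) (x : InputString S) (V : Set S.I)
    (a : OutputString S x) :
    marg S (fun x a => c * p x a) x V a = c * marg S p x V a := by
  unfold marg
  rw [Finset.mul_sum]
  refine Finset.sum_congr rfl fun b _ => ?_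
  split <;> simp

lemma marg_sub (p q : Behaviour S) (x : InputString S) (V : Set S.I)
    (a : OutputString S x) :
    marg S (fun x a => p x a - q x a) x V a = marg S p x V a - marg S q x V a := by
  unfold marg
  rw [← Finset.sum_sub_distrib]
  refine Finset.sum_congr rfl fun b _ => ?_
  split <;> simp

lemma marg_add (p q : Behaviour S) (x : InputString S) (V : Set S.I)
    (a : OutputString S x) :
    marg S (fun x a => p x a + q x a) x V a = marg S p x V a + marg S q x V a := by
  unfold marg
  rw [← Finset.sum_add_distrib]
  refine Finset.sum_congr rfl fun b _ => ?_
  split <;> simp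

lemma marg_univ (p : Behaviour S) (x : InputString S) (a : OutputString S x) :
    marg S p x Set.univ a = p x a := by
  unfold marg
  rw [Finset.sum_eq_single a]
  · simp
  · intro b _ hb
    rw [if_neg]
    intro hcon
    exact hb (funext fun i => hcon i trivial)
  · simp

lemma marg_empty (p : Behaviour S) (x : InputString S) (a : OutputString S x) :
    marg S p x (∅ : Set S.I) a = ∑ b, p x b := by
  unfold marg
  refine Finset.sum_congr rfl fun b _ => ?_
  rw [if_pos]
  intro i hi
  exact absurd hi (Set.notMem_empty i)

/-- Number of output strings agreeing with `c` off `i` equals the number of outputs at `i`. -/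
lemma count_off (x : InputString S) (i : S.I) (c : OutputString S x) :
    ∑ b : OutputString S x, (if ∀ j, j ≠ i → b j = c j then (1:ℝ) else 0) =
      (Fintype.card (S.O i (x i)) : ℝ) := by
  have key : ∀ b : OutputString S x,
      (if ∀ j, j ≠ i → b j = c j then (1:ℝ) else 0) =
      ∑ o : S.O i (x i), (if b = Function.update c i o then (1:ℝ) else 0) := by
    intro b
    by_cases hb : ∀ j, j ≠ i → b j = c j
    · rw [if_pos hb, Finset.sum_eq_single (b i)]
      · rw [if_pos]
        funext j
        by_cases hj : j = i
        · subst hj; rw [Function.update_self]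
        · rw [Function.update_of_ne hj]; exact hb j hj
      · intro o _ ho
        rw [if_neg]
        intro hcon
        exact ho (by rw [hcon, Function.update_self])
      · simp
    · rw [if_neg hb]
      symm
      refine Finset.sum_eq_zero fun o _ => ?_
      rw [if_neg]
      intro hcon
      exact hb (by intro j hj; rw [hcon, Function.update_of_ne hj])
  rw [Finset.sum_congr rfl (fun b _ => key b), Finset.sum_comm]
  simp [Finset.sum_ite_eq']

end Pironio
section Pironio2
open Finset

variable {S : Scenario}

/-- Transport an output string along an input update, inserting `o` at position `i`. -/
noncomputable def transp (x : InputString S) (i : S.I) (m : S.M i) (o : S.O i m) (a : OutputString S x) :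
    OutputString S (Function.update x i m) := fun j =>
  if h : j = i then
    cast (show S.O i m = S.O j (Function.update x i m j) by
      subst h; rw [Function.update_self]) o
  else
    cast (show S.O j (x j) = S.O j (Function.update x i m j) by
      rw [Function.update_of_ne h]) (a j)

lemma transp_heq_ne (x : InputString S) (i : S.I) (m : S.M i) (o : S.O i m)
    (a : OutputString S x) {j : S.I} (h : j ≠ i) : HEq (transp x i m o a j) (a j) := by
  unfold transp
  rw [dif_neg h]
  exact cast_heq _ _

lemma transp_heq_eq (x : InputString S) (i : S.I) (m : S.M i) (o : S.O i m)
    (a : OutputString S x) : HEq (transp x i m o a i) o := by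
  unfold transp
  rw [dif_pos rfl]
  exact cast_heq _ _

/-- `marg` over `V` expressed via marginals over `{i}ᶜ`, for `i ∉ V`. -/
lemma marg_via_compl (p : Behaviour S) (x : InputString S) (i : S.I) (V : Set S.I)
    (hiV : i ∉ V) (a : OutputString S x) :
    (Fintype.card (S.O i (x i)) : ℝ) * marg S p x V a =
      ∑ b : OutputString S x, (if ∀ j ∈ V, b j = a j then marg S p x {i}ᶜ b else 0) := by
  have expand : ∀ b : OutputString S x,
      (if ∀ j ∈ V, b j = a j then marg S p x {i}ᶜ b else 0) =
      ∑ c : OutputString S x,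
        (if ∀ j ∈ V, b j = a j then (if ∀ j ∈ ({i}ᶜ : Set S.I), c j = b j then p x c else 0)
          else 0) := by
    intro b
    by_cases hb : ∀ j ∈ V, b j = a j
    · rw [if_pos hb]; unfold marg
      exact Finset.sum_congr rfl fun c _ => by rw [if_pos hb]; exact ite_inst
    · rw [if_neg hb]; symm; exact Finset.sum_eq_zero fun c _ => by rw [if_neg hb]
  rw [Finset.sum_congr rfl (fun b _ => expand b), Finset.sum_comm]
  unfold marg
  rw [Finset.mul_sum]
  refine Finset.sum_congr rfl fun c _ => ?_
  have inner : ∀ b : OutputString S x,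
      (if ∀ j ∈ V, b j = a j then (if ∀ j ∈ ({i}ᶜ : Set S.I), c j = b j then p x c else 0)
        else 0) =
      (if ∀ j ∈ V, c j = a j then (if ∀ j, j ≠ i → b j = c j then (1:ℝ) else 0) * p x c
        else 0) := by
    intro b
    by_cases hbc : ∀ j, j ≠ i → b j = c j
    · have hcb : ∀ j ∈ ({i}ᶜ : Set S.I), c j = b j := fun j hj => (hbc j (by simpa using hj)).symm
      have hiff : (∀ j ∈ V, b j = a j) ↔ (∀ j ∈ V, c j = a j) := by
        constructor
        · intro h j hj
          exact ((hbc j fun hh => hiV (hh ▸ hj)).symm.trans (h j hj))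
        · intro h j hj
          exact (hbc j fun hh => hiV (hh ▸ hj)).trans (h j hj)
      by_cases hc : ∀ j ∈ V, c j = a j
      · rw [if_pos (hiff.mpr hc), if_pos hcb, if_pos hc, if_pos hbc, one_mul]
      · rw [if_neg (fun h => hc (hiff.mp h)), if_neg hc]
    · have hncb : ¬ ∀ j ∈ ({i}ᶜ : Set S.I), c j = b j :=
        fun h => hbc fun j hj => (h j (by simpa using hj)).symm
      by_cases hc : ∀ j ∈ V, c j = a j
      · rw [if_pos hc, if_neg hbc, zero_mul]
        by_cases hba : ∀ j ∈ V, b j = a j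
        · rw [if_pos hba, if_neg hncb]
        · rw [if_neg hba]
      · rw [if_neg hc]
        by_cases hba : ∀ j ∈ V, b j = a j
        · rw [if_pos hba, if_neg hncb]
        · rw [if_neg hba]
  rw [Finset.sum_congr rfl (fun b _ => inner b)]
  by_cases hc : ∀ j ∈ V, c j = a j
  · simp only [if_pos hc]
    rw [← Finset.sum_mul, count_off (S := S) x i c]
  · simp only [if_neg hc]
    simp

end Pironio2
section Pironio3
open Finset

variable {S : Scenario}

/-- Inverse transport of an output string along an input update. -/
noncomputable def transpBack (x : InputString S) (i : S.I) (m : S.M i) (w : S.O i (x i))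
    (b' : OutputString S (Function.update x i m)) : OutputString S x := fun j =>
  if h : j = i then cast (show S.O i (x i) = S.O j (x j) by rw [h]) w
  else cast (show S.O j (Function.update x i m j) = S.O j (x j) by
    rw [Function.update_of_ne h]) (b' j)

lemma transpBack_heq_ne (x : InputString S) (i : S.I) (m : S.M i) (w : S.O i (x i))
    (b' : OutputString S (Function.update x i m)) {j : S.I} (h : j ≠ i) :
    HEq (transpBack x i m w b' j) (b' j) := by
  unfold transpBack; rw [dif_neg h]; exact cast_heq _ _

lemma transpBack_heq_eq (x : InputString S) (i : S.I) (m : S.M i) (w : S.O i (x i))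
    (b' : OutputString S (Function.update x i m)) :
    HEq (transpBack x i m w b' i) w := by
  unfold transpBack; rw [dif_pos rfl]; exact cast_heq _ _

noncomputable def updMap (x : InputString S) (i : S.I) (m : S.M i) :
    S.O i m × OutputString S x → OutputString S (Function.update x i m) × S.O i (x i) :=
  fun p => (transp x i m p.1 p.2, p.2 i)

noncomputable def updMapInv (x : InputString S) (i : S.I) (m : S.M i) :
    OutputString S (Function.update x i m) × S.O i (x i) → S.O i m × OutputString S x :=
  fun q => (cast (congrArg (S.O i) (Function.update_self i m x)) (q.1 i),
    transpBack x i m q.2 q.1)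

lemma updMap_bijective (x : InputString S) (i : S.I) (m : S.M i) :
    Function.Bijective (updMap x i m) := by
  refine Function.bijective_iff_has_inverse.mpr ⟨updMapInv x i m, ?_, ?_⟩
  · rintro ⟨u, b⟩
    unfold updMap updMapInv
    refine Prod.ext ?_ ?_
    · exact eq_of_heq ((cast_heq _ _).trans (transp_heq_eq x i m u b))
    · funext j
      by_cases hj : j = i
      · subst hj
        exact eq_of_heq (transpBack_heq_eq x j m (b j) (transp x j m u b))
      · exact eq_of_heq ((transpBack_heq_ne x i m _ _ hj).trans (transp_heq_ne x i m u b hj))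
  · rintro ⟨b', w⟩
    unfold updMap updMapInv
    refine Prod.ext ?_ ?_
    · funext j
      by_cases hj : j = i
      · subst hj
        exact eq_of_heq ((transp_heq_eq x j m _ _).trans (cast_heq _ _))
      · exact eq_of_heq ((transp_heq_ne x i m _ _ hj).trans (transpBack_heq_ne x i m w b' hj))
    · exact eq_of_heq (transpBack_heq_eq x i m w b')

lemma sum_prod_right_const {α β : Type*} [Fintype α] [Fintype β] (f : β → ℝ) :
    ∑ p : α × β, f p.2 = (Fintype.card α : ℝ) * ∑ b, f b := by
  rw [Fintype.sum_prod_type]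
  simp [Finset.sum_const, Finset.card_univ, nsmul_eq_mul]

lemma sum_prod_left_const {α β : Type*} [Fintype α] [Fintype β] (f : α → ℝ) :
    ∑ p : α × β, f p.1 = (Fintype.card β : ℝ) * ∑ a, f a := by
  rw [Fintype.sum_prod_type_right]
  simp [Finset.sum_const, Finset.card_univ, nsmul_eq_mul]

/-- Single-step no-signalling invariance of marginals over `V` with `i ∉ V`. -/
lemma marg_update (v : Behaviour S) (hns : NoSignalling S v) (i : S.I) (x : InputString S)
    (m : S.M i) (o' : S.O i m) (V : Set S.I) (hiV : i ∉ V) (a : OutputString S x) :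
    marg S v x V a = marg S v (Function.update x i m) V (transp x i m o' a) := by
  set x' := Function.update x i m with hx'
  set a' := transp x i m o' a with ha'
  set k : ℝ := (Fintype.card (S.O i (x i)) : ℝ) with hk
  set k' : ℝ := (Fintype.card (S.O i m) : ℝ) with hk'
  have hkpos : (0:ℝ) < k := by rw [hk]; exact_mod_cast Fintype.card_pos
  have hk'pos : (0:ℝ) < k' := by rw [hk']; exact_mod_cast Fintype.card_pos
  have hcard : (Fintype.card (S.O i (x' i)) : ℝ) = k' := by
    rw [hk']
    exact_mod_cast congrArg Nat.cast
      (Fintype.card_congr (Equiv.cast (congrArg (S.O i) (Function.update_self i m x))))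
  set F : OutputString S x' × S.O i (x i) → ℝ :=
    fun q => if ∀ j ∈ V, q.1 j = a' j then marg S v x' {i}ᶜ q.1 else 0 with hF
  have summand : ∀ (p : S.O i m × OutputString S x),
      (if ∀ j ∈ V, p.2 j = a j then marg S v x {i}ᶜ p.2 else 0) = F (updMap x i m p) := by
    rintro ⟨u, b⟩
    have hiff : (∀ j ∈ V, b j = a j) ↔ (∀ j ∈ V, transp x i m u b j = a' j) := by
      refine forall₂_congr fun j hj => ?_
      have hji : j ≠ i := fun h => hiV (h ▸ hj)
      exact eq_iff_of_heq (congrArg (S.O j) (Function.update_of_ne hji m x)).symm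
        (transp_heq_ne x i m u b hji).symm (transp_heq_ne x i m o' a hji).symm
    have hmarg : marg S v x {i}ᶜ b = marg S v x' {i}ᶜ (transp x i m u b) :=
      hns i x m b (transp x i m u b) (fun j hj => (transp_heq_ne x i m u b hj).symm)
    rw [hmarg]
    exact ite_cond_congr' hiff _ _
  have key : k' * (k * marg S v x V a) =
      k * ((Fintype.card (S.O i (x' i)) : ℝ) * marg S v x' V a') := by
    rw [marg_via_compl v x i V hiV a, marg_via_compl v x' i V hiV a']
    rw [← sum_prod_right_const (α := S.O i m)
      (f := fun b => if ∀ j ∈ V, b j = a j then marg S v x {i}ᶜ b else 0)]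
    rw [← sum_prod_left_const (β := S.O i (x i))
      (f := fun b' => if ∀ j ∈ V, b' j = a' j then marg S v x' {i}ᶜ b' else 0)]
    rw [Finset.sum_congr rfl (fun p _ => summand p)]
    exact Fintype.sum_bijective (updMap x i m) (updMap_bijective x i m) _ F (fun p => rfl)
  have hkk : k' * k ≠ 0 := by positivity
  have key2 : (k' * k) * marg S v x V a = (k' * k) * marg S v x' V a' := by
    calc (k' * k) * marg S v x V a = k' * (k * marg S v x V a) := by ring
    _ = k * ((Fintype.card (S.O i (x' i)) : ℝ) * marg S v x' V a') := key
    _ = k * (k' * marg S v x' V a') := by rw [hcard]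
    _ = (k' * k) * marg S v x' V a' := by ring
  exact mul_left_cancel₀ hkk key2

end Pironio3
section Pironio4
open Finset

variable {S : Scenario}

/-- Iterated no-signalling: marginals over `V` depend only on the inputs in `V`. -/
lemma marg_transport (v : Behaviour S) (hns : NoSignalling S v) :
    ∀ (n : ℕ) (x y : InputString S),
      (Finset.univ.filter (fun i => x i ≠ y i)).card ≤ n →
      ∀ (V : Set S.I), (∀ i ∈ V, x i = y i) →
      ∀ (a : OutputString S x) (a' : OutputString S y),
      (∀ i ∈ V, HEq (a i) (a' i)) → marg S v x V a = marg S v y V a' := by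
  intro n
  induction n with
  | zero =>
    intro x y hcard V hxy a a' ha
    have hxy' : x = y := by
      funext i
      by_contra h
      have hmem : i ∈ Finset.univ.filter (fun i => x i ≠ y i) :=
        Finset.mem_filter.mpr ⟨Finset.mem_univ i, h⟩
      have := Finset.card_eq_zero.mp (Nat.le_zero.mp hcard)
      rw [this] at hmem
      exact absurd hmem (Finset.notMem_empty i)
    subst hxy'
    exact marg_congr (fun i hi => eq_of_heq (ha i hi))
  | succ n ih =>
    intro x y hcard V hxy a a' ha
    by_cases hdis : ∀ i, x i = y i
    · have hxy' : x = y := funext hdis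
      subst hxy'
      exact marg_congr (fun i hi => eq_of_heq (ha i hi))
    · push_neg at hdis
      obtain ⟨i, hi⟩ := hdis
      have hiV : i ∉ V := fun h => hi (hxy i h)
      set o' : S.O i (y i) := Classical.arbitrary _ with ho'
      rw [marg_update v hns i x (y i) o' V hiV a]
      refine ih (Function.update x i (y i)) y ?_ V ?_ _ a' ?_
      · have hsub : (Finset.univ.filter fun j => Function.update x i (y i) j ≠ y j) ⊆
            (Finset.univ.filter fun j => x j ≠ y j).erase i := by
          intro j hj
          rw [Finset.mem_filter] at hj
          have hji : j ≠ i := by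
            intro h
            subst h
            rw [Function.update_self] at hj
            exact hj.2 rfl
          refine Finset.mem_erase.mpr ⟨hji, Finset.mem_filter.mpr ⟨Finset.mem_univ j, ?_⟩⟩
          rw [Function.update_of_ne hji] at hj
          exact hj.2
        have hmem : i ∈ Finset.univ.filter fun j => x j ≠ y j :=
          Finset.mem_filter.mpr ⟨Finset.mem_univ i, hi⟩
        have := Finset.card_le_card hsub
        rw [Finset.card_erase_of_mem hmem] at this
        omega
      · intro j hj
        have hji : j ≠ i := fun h => hiV (h ▸ hj)
        rw [Function.update_of_ne hji]
        exact hxy j hj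
      · intro j hj
        have hji : j ≠ i := fun h => hiV (h ▸ hj)
        exact (transp_heq_ne x i (y i) o' a hji).trans (ha j hj)

/-- Summing a marginal over all outputs of party `i ∈ V` gives the marginal over `V \ {i}`. -/
lemma margsum (v : Behaviour S) (x : InputString S) (V : Set S.I) (i : S.I) (hiV : i ∈ V)
    (a : OutputString S x) :
    ∑ o : S.O i (x i), marg S v x V (Function.update a i o) =
      marg S v x (V \ {i}) a := by
  unfold marg
  rw [Finset.sum_comm]
  refine Finset.sum_congr rfl fun b _ => ?_
  by_cases hb : ∀ j ∈ V \ ({i} : Set S.I), b j = a j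
  · rw [if_pos hb, Finset.sum_eq_single (b i)]
    · rw [if_pos]
      intro j hj
      by_cases hji : j = i
      · subst hji; rw [Function.update_self]
      · rw [Function.update_of_ne hji]
        exact hb j ⟨hj, by simp [hji]⟩
    · intro o _ ho
      rw [if_neg]
      intro hcon
      have := hcon i hiV
      rw [Function.update_self] at this
      exact ho this.symm
    · simp
  · rw [if_neg hb]
    refine Finset.sum_eq_zero fun o _ => ?_
    rw [if_neg]
    intro hcon
    refine hb fun j hj => ?_
    have hji : j ≠ i := by
      intro h
      exact hj.2 (by simp [h])
    have := hcon j hj.1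
    rwa [Function.update_of_ne hji] at this

end Pironio4
section Pironio5
open Finset

variable (S : Scenario)

/-- A distinguished output for every input. -/
noncomputable def ostar (i : S.I) (x : S.M i) : S.O i x := Classical.arbitrary _

/-- Truncated single-party coordinates: an input together with a non-distinguished output. -/
def Dcoord (i : S.I) : Type := Σ x : S.M i, {a : S.O i x // a ≠ ostar S i x}

noncomputable instance (i : S.I) : Fintype (Dcoord S i) := by
  unfold Dcoord; infer_instance

/-- The global coordinate type indexing truncated marginals. -/
def Coord : Type :=
  Σ VV : {V : Finset S.I // V.Nonempty}, ∀ i : {i // i ∈ VV.1}, Dcoord S i.1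

noncomputable instance : Fintype (Coord S) := by
  unfold Coord; infer_instance

/-- A reference input string. -/
noncomputable def x0 : InputString S := fun _ => Classical.arbitrary _

/-- The input string associated to a coordinate. -/
noncomputable def xof (c : Coord S) : InputString S := fun i =>
  if h : i ∈ c.1.1 then (c.2 ⟨i, h⟩).1 else x0 S i

lemma xof_mem (c : Coord S) {i : S.I} (h : i ∈ c.1.1) :
    xof S c i = (c.2 ⟨i, h⟩).1 := by
  unfold xof; rw [dif_pos h]

/-- The output string associated to a coordinate. -/
noncomputable def aof (c : Coord S) : OutputString S (xof S c) := fun i =>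
  if h : i ∈ c.1.1 then
    cast (congrArg (S.O i) (xof_mem S c h).symm) (c.2 ⟨i, h⟩).2.1
  else Classical.arbitrary _

lemma aof_mem_heq (c : Coord S) {i : S.I} (h : i ∈ c.1.1) :
    HEq (aof S c i) (c.2 ⟨i, h⟩).2.1 := by
  unfold aof; rw [dif_pos h]; exact cast_heq _ _

/-- The truncated-marginal evaluation of a behaviour at a coordinate. -/
noncomputable def phiFun (p : Behaviour S) (c : Coord S) : ℝ :=
  marg S p (xof S c) ↑c.1.1 (aof S c)

variable {S}

/-- Vanishing of all truncated marginals forces a sum-zero no-signalling vector to vanish: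
all marginals over arbitrary finsets vanish. -/
lemma margzero (v : Behaviour S) (hsum : ∀ x, ∑ a, v x a = 0) (hns : NoSignalling S v)
    (hPhi : ∀ c, phiFun S v c = 0) :
    ∀ (n : ℕ) (V : Finset S.I), V.card ≤ n → ∀ (x : InputString S) (a : OutputString S x),
      marg S v x ↑V a = 0 := by
  intro n
  induction n using Nat.strong_induction_on with
  | _ n ih =>
  intro V hV x a
  have base : ∀ (x : InputString S) (a : OutputString S x),
      (∀ i ∈ V, a i ≠ ostar S i (x i)) → marg S v x ↑V a = 0 := by
    intro x a hgood
    rcases V.eq_empty_or_nonempty with hVe | hVn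
    · subst hVe
      rw [show ((∅ : Finset S.I) : Set S.I) = (∅ : Set S.I) from by simp, marg_empty]
      exact hsum x
    · set c : Coord S := ⟨⟨V, hVn⟩, fun ip => ⟨x ip.1, ⟨a ip.1, hgood ip.1 ip.2⟩⟩⟩ with hc
      have h1 : marg S v x ↑V a = marg S v (xof S c) ↑V (aof S c) := by
        refine marg_transport v hns
          ((Finset.univ.filter fun i => x i ≠ xof S c i).card) x (xof S c) le_rfl ↑V ?_ a
          (aof S c) ?_
        · intro i hi
          have hi' : i ∈ c.1.1 := by exact_mod_cast hi
          rw [xof_mem S c hi']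
        · intro i hi
          have hi' : i ∈ c.1.1 := by exact_mod_cast hi
          exact (aof_mem_heq S c hi').symm
      rw [h1]
      exact hPhi c
  suffices H : ∀ (t : ℕ) (a : OutputString S x),
      (V.filter fun i => a i = ostar S i (x i)).card ≤ t → marg S v x ↑V a = 0 by
    exact H (V.filter fun i => a i = ostar S i (x i)).card a le_rfl
  intro t
  induction t with
  | zero =>
    intro a ha
    refine base x a fun i hi hbad => ?_
    have hmem : i ∈ V.filter fun i => a i = ostar S i (x i) :=
      Finset.mem_filter.mpr ⟨hi, hbad⟩
    rw [Finset.card_eq_zero.mp (Nat.le_zero.mp ha)] at hmem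
    exact absurd hmem (Finset.notMem_empty i)
  | succ t iht =>
    intro a ha
    by_cases hbadempty : (V.filter fun i => a i = ostar S i (x i)) = ∅
    · refine base x a fun i hi hbad => ?_
      have hmem : i ∈ V.filter fun i => a i = ostar S i (x i) :=
        Finset.mem_filter.mpr ⟨hi, hbad⟩
      rw [hbadempty] at hmem
      exact absurd hmem (Finset.notMem_empty i)
    · obtain ⟨i, hi⟩ := Finset.nonempty_iff_ne_empty.mpr hbadempty
      rw [Finset.mem_filter] at hi
      obtain ⟨hiV, hbad⟩ := hi
      have hsum_id := margsum v x ↑V i (Finset.mem_coe.mpr hiV) a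
      have herase : marg S v x ((↑V : Set S.I) \ {i}) a = 0 := by
        rw [← Finset.coe_erase]
        have hVpos : 1 ≤ V.card := Finset.card_pos.mpr ⟨i, hiV⟩
        exact ih (n - 1) (by omega) (V.erase i)
          (by rw [Finset.card_erase_of_mem hiV]; omega) x a
      have hothers : ∀ o : S.O i (x i), o ≠ a i →
          marg S v x ↑V (Function.update a i o) = 0 := by
        intro o ho
        refine iht (Function.update a i o) ?_
        have hsub : (V.filter fun j => Function.update a i o j = ostar S j (x j)) ⊆
            (V.filter fun j => a j = ostar S j (x j)).erase i := by
          intro j hj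
          rw [Finset.mem_filter] at hj
          have hji : j ≠ i := by
            intro h
            subst h
            rw [Function.update_self] at hj
            exact ho (hj.2.trans hbad.symm)
          rw [Function.update_of_ne hji] at hj
          exact Finset.mem_erase.mpr ⟨hji, Finset.mem_filter.mpr ⟨hj.1, hj.2⟩⟩
        have hle := Finset.card_le_card hsub
        rw [Finset.card_erase_of_mem (Finset.mem_filter.mpr ⟨hiV, hbad⟩)] at hle
        omega
      have hdecomp : ∑ o : S.O i (x i), marg S v x ↑V (Function.update a i o) =
          marg S v x ↑V (Function.update a i (a i)) +
            ∑ o ∈ Finset.univ.erase (a i), marg S v x ↑V (Function.update a i o) :=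
        (Finset.add_sum_erase _ _ (Finset.mem_univ (a i))).symm
      rw [Function.update_eq_self] at hdecomp
      have hrest : ∑ o ∈ Finset.univ.erase (a i), marg S v x ↑V (Function.update a i o) = 0 :=
        Finset.sum_eq_zero fun o ho => hothers o (Finset.mem_erase.mp ho).1
      rw [hsum_id] at hdecomp
      rw [herase, hrest] at hdecomp
      linarith

end Pironio5
section Pironio6
open Finset

variable {S : Scenario}

lemma heq_congr_arg {γ : Type*} {O' : γ → Type*} (f : ∀ m : γ, O' m) {m₁ m₂ : γ}
    (h : m₁ = m₂) : HEq (f m₁) (f m₂) := by subst h; rfl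

variable (S)

/-- The deterministic behaviour associated to a family of local strategies. -/
noncomputable def detB (lam : ∀ i (x : S.M i), S.O i x) : Behaviour S := fun x a =>
  ∏ j, if a j = lam j (x j) then (1:ℝ) else 0

variable {S}

lemma detB_eq (lam : ∀ i (x : S.M i), S.O i x) (x : InputString S) (a : OutputString S x) :
    detB S lam x a = if (∀ j, a j = lam j (x j)) then 1 else 0 := by
  unfold detB
  by_cases h : ∀ j, a j = lam j (x j)
  · rw [if_pos h]
    exact Finset.prod_eq_one fun j _ => if_pos (h j)
  · rw [if_neg h]
    push_neg at h
    obtain ⟨j, hj⟩ := h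
    exact Finset.prod_eq_zero (Finset.mem_univ j) (if_neg hj)

lemma marg_detB (lam : ∀ i (x : S.M i), S.O i x) (x : InputString S) (V : Set S.I)
    (a : OutputString S x) :
    marg S (detB S lam) x V a = if (∀ i ∈ V, lam i (x i) = a i) then 1 else 0 := by
  unfold marg
  have summand : ∀ b : OutputString S x,
      (if ∀ i ∈ V, b i = a i then detB S lam x b else 0) =
      (if b = (fun j => lam j (x j)) then
        (if ∀ i ∈ V, lam i (x i) = a i then (1:ℝ) else 0) else 0) := by
    intro b
    by_cases hb : b = fun j => lam j (x j)
    · rw [if_pos hb]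
      have h1 : detB S lam x b = 1 := by
        rw [detB_eq, if_pos (fun j => by rw [hb])]
      rw [h1]
      refine ite_cond_congr' ?_ _ _
      refine forall₂_congr fun i _ => ?_
      rw [hb]
    · rw [if_neg hb]
      by_cases hcond : ∀ i ∈ V, b i = a i
      · rw [if_pos hcond]
        rw [detB_eq, if_neg]
        intro hcon
        exact hb (funext hcon)
      · rw [if_neg hcond]
  rw [Finset.sum_congr rfl (fun b _ => summand b)]
  rw [Finset.sum_ite_eq' Finset.univ (fun j => lam j (x j))
    (fun _ => if ∀ i ∈ V, lam i (x i) = a i then (1:ℝ) else 0)]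
  rw [if_pos (Finset.mem_univ _)]

lemma detB_isBehaviour (lam : ∀ i (x : S.M i), S.O i x) : IsBehaviour S (detB S lam) := by
  constructor
  · intro x a
    unfold detB
    refine Finset.prod_nonneg fun j _ => ?_
    split <;> norm_num
  · intro x
    have h := marg_detB lam x (∅ : Set S.I) (Classical.arbitrary _)
    rw [marg_empty] at h
    rw [h, if_pos]
    intro i hi
    exact absurd hi (Set.notMem_empty i)

lemma detB_ns (lam : ∀ i (x : S.M i), S.O i x) : NoSignalling S (detB S lam) := by
  intro i x m a a' hheq
  rw [marg_detB, marg_detB]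
  refine ite_cond_congr' ?_ _ _
  refine forall₂_congr fun j hj => ?_
  have hji : j ≠ i := by simpa using hj
  have hx : x j = Function.update x i m j := (Function.update_of_ne hji m x).symm
  exact eq_iff_of_heq (congrArg (S.O j) hx) (heq_congr_arg (lam j) hx) (hheq j hji)

lemma detB_pred (lam : ∀ i (x : S.M i), S.O i x) : Predictable S (detB S lam) := by
  intro x a
  rw [detB_eq]
  split
  · right; rfl
  · left; rfl

lemma detB_mem_PNS (lam : ∀ i (x : S.M i), S.O i x) : detB S lam ∈ PNS S :=
  ⟨detB_isBehaviour lam, detB_ns lam, detB_pred lam⟩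

lemma PNS_subset_NS : PNS S ⊆ NSset S := fun _ hp => ⟨hp.1, hp.2.1⟩

lemma phiFun_detB (lam : ∀ i (x : S.M i), S.O i x) (c : Coord S) :
    phiFun S (detB S lam) c =
      if (∀ i (h : i ∈ c.1.1), lam i ((c.2 ⟨i, h⟩).1) = (c.2 ⟨i, h⟩).2.1) then 1 else 0 := by
  unfold phiFun
  rw [marg_detB]
  refine ite_cond_congr' ?_ _ _
  constructor
  · intro h i hi
    have hi' : i ∈ (↑c.1.1 : Set S.I) := Finset.mem_coe.mpr hi
    exact (eq_iff_of_heq (congrArg (S.O i) (xof_mem S c hi))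
      (heq_congr_arg (lam i) (xof_mem S c hi)) (aof_mem_heq S c hi)).mp (h i hi')
  · intro h i hi
    have hi' : i ∈ c.1.1 := Finset.mem_coe.mp hi
    exact (eq_iff_of_heq (congrArg (S.O i) (xof_mem S c hi'))
      (heq_congr_arg (lam i) (xof_mem S c hi')) (aof_mem_heq S c hi')).mpr (h i hi')

end Pironio6
section Pironio7
open Finset

variable {S : Scenario}

/-- The input-output pair of a coordinate at a party, as a sigma type. -/
def gpair (c : Coord S) (i : S.I) (h : i ∈ c.1.1) : Σ x : S.M i, S.O i x :=
  ⟨(c.2 ⟨i, h⟩).1, (c.2 ⟨i, h⟩).2.1⟩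

/-- The local deterministic strategy family attached to a coordinate and `T ⊆ V`. -/
noncomputable def lamOf (c : Coord S) (T : Finset S.I) : ∀ i (x : S.M i), S.O i x :=
  fun i x =>
    if h : ∃ hi : i ∈ c.1.1, i ∈ T ∧ (c.2 ⟨i, hi⟩).1 = x then
      cast (congrArg (S.O i) h.choose_spec.2) (c.2 ⟨i, h.choose⟩).2.1
    else ostar S i x

lemma lamOf_eval (c c' : Coord S) (T : Finset S.I) (i : S.I) (h' : i ∈ c'.1.1) :
    (lamOf c T i ((c'.2 ⟨i, h'⟩).1) = (c'.2 ⟨i, h'⟩).2.1) ↔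
      (∃ hi : i ∈ c.1.1, i ∈ T ∧ gpair c i hi = gpair c' i h') := by
  by_cases hex : ∃ hi : i ∈ c.1.1, i ∈ T ∧ (c.2 ⟨i, hi⟩).1 = (c'.2 ⟨i, h'⟩).1
  · unfold lamOf
    rw [dif_pos hex]
    constructor
    · intro heq
      refine ⟨hex.choose, hex.choose_spec.1, Sigma.ext hex.choose_spec.2 ?_⟩
      exact ((cast_heq _ _).symm.trans (heq_of_eq heq)).symm.symm
    · rintro ⟨hi, hiT, hg⟩
      have h2 := (Sigma.ext_iff.mp hg).2
      exact eq_of_heq ((cast_heq _ _).trans h2)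
  · unfold lamOf
    rw [dif_neg hex]
    constructor
    · intro heq
      exact absurd heq.symm (c'.2 ⟨i, h'⟩).2.2
    · rintro ⟨hi, hiT, hg⟩
      exact absurd ⟨hi, hiT, (Sigma.ext_iff.mp hg).1⟩ hex

lemma phiFun_detB_lamOf (c c' : Coord S) (T : Finset S.I) :
    phiFun S (detB S (lamOf c T)) c' =
      if (c'.1.1 ⊆ T ∧ ∀ i (h' : i ∈ c'.1.1), ∃ hi : i ∈ c.1.1, gpair c i hi = gpair c' i h')
      then 1 else 0 := by
  rw [phiFun_detB]
  refine ite_cond_congr' ?_ _ _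
  constructor
  · intro h
    constructor
    · intro i hi
      exact ((lamOf_eval c c' T i hi).mp (h i hi)).choose_spec.1
    · intro i h'
      obtain ⟨hi, _, hg⟩ := (lamOf_eval c c' T i h').mp (h i h')
      exact ⟨hi, hg⟩
  · rintro ⟨hsub, hmatch⟩ i h'
    exact (lamOf_eval c c' T i h').mpr
      ⟨(hmatch i h').choose, hsub h', (hmatch i h').choose_spec⟩

end Pironio7
section Pironio7b
open Finset

variable {S : Scenario}

lemma sum_powerset_subset_signs {α : Type*} (V V' : Finset α) (hsub : V' ⊆ V) :
    ∑ T ∈ V.powerset.filter (fun T => V' ⊆ T), ((-1:ℝ))^T.card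
      = (-1)^V'.card * (if V = V' then 1 else 0) := by
  classical
  have key : ∑ T ∈ V.powerset.filter (fun T => V' ⊆ T), ((-1:ℝ))^T.card
      = ∑ U ∈ (V \ V').powerset, ((-1:ℝ))^(V'.card + U.card) := by
    refine Finset.sum_bij' (fun T _ => T \ V') (fun U _ => V' ∪ U) ?_ ?_ ?_ ?_ ?_
    · intro T hT
      rw [Finset.mem_filter, Finset.mem_powerset] at hT
      rw [Finset.mem_powerset]
      exact Finset.sdiff_subset_sdiff hT.1 Finset.Subset.rfl
    · intro U hU
      rw [Finset.mem_powerset] at hU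
      rw [Finset.mem_filter, Finset.mem_powerset]
      exact ⟨Finset.union_subset hsub (hU.trans (Finset.sdiff_subset)), Finset.subset_union_left⟩
    · intro T hT
      rw [Finset.mem_filter] at hT
      exact Finset.union_sdiff_of_subset hT.2
    · intro U hU
      rw [Finset.mem_powerset] at hU
      refine Finset.union_sdiff_cancel_left ?_
      exact Finset.disjoint_of_subset_right hU Finset.sdiff_disjoint.symm
    · intro T hT
      rw [Finset.mem_filter] at hT
      congr 1
      conv_lhs => rw [← Finset.union_sdiff_of_subset hT.2]
      rw [Finset.card_union_of_disjoint Finset.disjoint_sdiff]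
  rw [key]
  have : ∑ U ∈ (V \ V').powerset, ((-1:ℝ))^(V'.card + U.card)
      = (-1)^V'.card * ∑ U ∈ (V \ V').powerset, ((-1:ℝ))^U.card := by
    rw [Finset.mul_sum]
    exact Finset.sum_congr rfl fun U _ => by rw [pow_add]
  have hz : ∑ U ∈ (V \ V').powerset, ((-1:ℝ))^U.card = if V \ V' = ∅ then 1 else 0 := by
    have h := Finset.sum_powerset_neg_one_pow_card (x := V \ V')
    calc ∑ U ∈ (V \ V').powerset, ((-1:ℝ))^U.card
        = ((∑ U ∈ (V \ V').powerset, (-1:ℤ)^U.card : ℤ) : ℝ) := by push_cast; rfl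
      _ = ((if V \ V' = ∅ then (1:ℤ) else 0 : ℤ) : ℝ) := by rw [h]
      _ = if V \ V' = ∅ then 1 else 0 := by split <;> simp
  rw [this, hz]
  congr 1
  by_cases h : V \ V' = ∅
  · rw [if_pos h, if_pos]
    exact (Finset.Subset.antisymm (Finset.sdiff_eq_empty_iff_subset.mp h) hsub)
  · rw [if_neg h, if_neg]
    intro hcon
    exact h (by rw [hcon]; exact Finset.sdiff_self V')

/-- Full-match plus equal supports forces equal coordinates. -/
lemma coord_eq_of_match (c c' : Coord S) (hVV : c'.1.1 = c.1.1)
    (hM : ∀ i (h' : i ∈ c'.1.1), ∃ hi : i ∈ c.1.1, gpair c i hi = gpair c' i h') :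
    c' = c := by
  obtain ⟨⟨V, hV⟩, f⟩ := c
  obtain ⟨⟨V', hV'⟩, f'⟩ := c'
  dsimp at hVV
  subst hVV
  refine Sigma.ext rfl (heq_of_eq (funext fun ip => ?_))
  obtain ⟨i, hi⟩ := ip
  obtain ⟨hi2, hg⟩ := hM i hi
  have h1 := (Sigma.ext_iff.mp hg).1
  have h2 := (Sigma.ext_iff.mp hg).2
  dsimp [gpair] at h1 h2
  symm
  refine Sigma.ext h1 ?_
  refine Subtype.heq_iff_coe_heq ?_ ?_ |>.mpr h2
  · rw [h1]
  · rw [h1]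

end Pironio7b
section Pironio7c
open Finset

variable {S : Scenario}

lemma sum_signs (c c' : Coord S) :
    ∑ T ∈ c.1.1.powerset,
      ((-1:ℝ))^c.1.1.card * (-1)^T.card * phiFun S (detB S (lamOf c T)) c'
      = if c' = c then 1 else 0 := by
  by_cases hM : ∀ i (h' : i ∈ c'.1.1), ∃ hi : i ∈ c.1.1, gpair c i hi = gpair c' i h'
  · have hsub : c'.1.1 ⊆ c.1.1 := fun i hi => (hM i hi).choose
    have hterm : ∀ T ∈ c.1.1.powerset,
        ((-1:ℝ))^c.1.1.card * (-1)^T.card * phiFun S (detB S (lamOf c T)) c'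
          = (-1)^c.1.1.card * (if c'.1.1 ⊆ T then ((-1:ℝ))^T.card else 0) := by
      intro T _
      rw [phiFun_detB_lamOf]
      by_cases hT : c'.1.1 ⊆ T
      · rw [if_pos ⟨hT, hM⟩, if_pos hT]; ring
      · rw [if_neg (fun hc => hT hc.1), if_neg hT]; ring
    rw [Finset.sum_congr rfl hterm, ← Finset.mul_sum]
    rw [show (∑ T ∈ c.1.1.powerset, if c'.1.1 ⊆ T then ((-1:ℝ))^T.card else 0)
        = ∑ T ∈ c.1.1.powerset.filter (fun T => c'.1.1 ⊆ T), ((-1:ℝ))^T.card from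
      (Finset.sum_filter _ _).symm]
    rw [sum_powerset_subset_signs _ _ hsub]
    by_cases hVV : c.1.1 = c'.1.1
    · rw [if_pos hVV]
      rw [if_pos (coord_eq_of_match c c' hVV.symm hM)]
      rw [mul_one, ← pow_add, hVV]
      exact Even.neg_one_pow ⟨c'.1.1.card, rfl⟩
    · rw [if_neg hVV, if_neg (fun h => hVV (congrArg (fun d : Coord S => d.1.1) h).symm)]
      ring
  · have hz : ∀ T ∈ c.1.1.powerset,
        ((-1:ℝ))^c.1.1.card * (-1)^T.card * phiFun S (detB S (lamOf c T)) c' = 0 := by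
      intro T _
      rw [phiFun_detB_lamOf, if_neg (fun hc => hM hc.2)]
      ring
    rw [Finset.sum_eq_zero hz, if_neg]
    intro h
    subst h
    exact hM (fun i hi => ⟨hi, rfl⟩)

end Pironio7c
section Pironio8
open Finset

variable (S : Scenario)

/-- The truncated-marginal evaluation as a linear map. -/
noncomputable def Phi : Behaviour S →ₗ[ℝ] (Coord S → ℝ) where
  toFun p := phiFun S p
  map_add' p q := funext fun c => marg_add p q _ _ _
  map_smul' r p := funext fun c => marg_smul r p _ _ _

/-- The linear no-signalling subspace. -/
noncomputable def Wsub : Submodule ℝ (Behaviour S) where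
  carrier := {v | (∀ x, ∑ a, v x a = 0) ∧ NoSignalling S v}
  zero_mem' := by
    constructor
    · intro x; simp
    · intro i x m a a' h
      unfold marg
      simp
  add_mem' := by
    rintro p q ⟨hp1, hp2⟩ ⟨hq1, hq2⟩
    constructor
    · intro x
      have h : ∑ a, (p + q) x a = (∑ a, p x a) + ∑ a, q x a := by
        rw [← Finset.sum_add_distrib]; rfl
      rw [h, hp1 x, hq1 x, add_zero]
    · intro i x m a a' h
      rw [show marg S (p + q) x {i}ᶜ a = marg S p x {i}ᶜ a + marg S q x {i}ᶜ a from
          marg_add p q x {i}ᶜ a,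
        show marg S (p + q) (Function.update x i m) {i}ᶜ a'
            = marg S p (Function.update x i m) {i}ᶜ a'
              + marg S q (Function.update x i m) {i}ᶜ a' from marg_add p q _ {i}ᶜ a',
        hp2 i x m a a' h, hq2 i x m a a' h]
  smul_mem' := by
    rintro r p ⟨hp1, hp2⟩
    constructor
    · intro x
      have h : ∑ a, (r • p) x a = r * ∑ a, p x a := by
        rw [Finset.mul_sum]; rfl
      rw [h, hp1 x, mul_zero]
    · intro i x m a a' h
      rw [show marg S (r • p) x {i}ᶜ a = r * marg S p x {i}ᶜ a from marg_smul r p x {i}ᶜ a,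
        show marg S (r • p) (Function.update x i m) {i}ᶜ a'
            = r * marg S p (Function.update x i m) {i}ᶜ a' from marg_smul r p _ {i}ᶜ a',
        hp2 i x m a a' h]

variable {S}

lemma vs_NS_le_W : vectorSpan ℝ (NSset S) ≤ Wsub S := by
  rw [vectorSpan_def, Submodule.span_le]
  rintro v ⟨p, hp, q, hq, rfl⟩
  constructor
  · intro x
    have h : ∑ a, (p -ᵥ q) x a = (∑ a, p x a) - ∑ a, q x a := by
      rw [← Finset.sum_sub_distrib]; rfl
    rw [h, hp.1.2 x, hq.1.2 x, sub_self]
  · intro i x m a a' h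
    rw [show marg S (p -ᵥ q) x {i}ᶜ a = marg S p x {i}ᶜ a - marg S q x {i}ᶜ a from
        marg_sub p q x {i}ᶜ a,
      show marg S (p -ᵥ q) (Function.update x i m) {i}ᶜ a'
          = marg S p (Function.update x i m) {i}ᶜ a'
            - marg S q (Function.update x i m) {i}ᶜ a' from marg_sub p q _ {i}ᶜ a',
      hp.2 i x m a a' h, hq.2 i x m a a' h]

instance : FiniteDimensional ℝ (Behaviour S) := by
  unfold Behaviour
  infer_instance

/-- Any member of `Wsub` killed by `Phi` vanishes. -/
lemma phi_inj_on_W (v : Behaviour S) (hv : v ∈ Wsub S) (hz : Phi S v = 0) : v = 0 := by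
  obtain ⟨hsum, hns⟩ := hv
  have hPhi : ∀ c, phiFun S v c = 0 := fun c => congrFun hz c
  funext x a
  have h := margzero v hsum hns hPhi (Finset.univ : Finset S.I).card Finset.univ le_rfl x a
  rw [Finset.coe_univ, marg_univ] at h
  exact h

lemma finrank_vs_NS_le :
    Module.finrank ℝ (vectorSpan ℝ (NSset S)) ≤ Fintype.card (Coord S) := by
  have hinj : Function.Injective
      ((Phi S).comp (Submodule.subtype (vectorSpan ℝ (NSset S)))) := by
    rw [← LinearMap.ker_eq_bot]
    rw [Submodule.eq_bot_iff]
    rintro ⟨v, hv⟩ hker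
    rw [LinearMap.mem_ker] at hker
    have : v = 0 := phi_inj_on_W v (vs_NS_le_W hv) hker
    exact Subtype.ext this
  have := LinearMap.finrank_le_finrank_of_injective hinj
  rwa [Module.finrank_fintype_fun_eq_card] at this

end Pironio8
section Pironio8b
open Finset

variable {S : Scenario}

lemma sum_pow_real {α : Type*} (V : Finset α) :
    ∑ U ∈ V.powerset, ((-1:ℝ))^U.card = if V = ∅ then 1 else 0 := by
  classical
  have h := Finset.sum_powerset_neg_one_pow_card (x := V)
  calc ∑ U ∈ V.powerset, ((-1:ℝ))^U.card
      = ((∑ U ∈ V.powerset, (-1:ℤ)^U.card : ℤ) : ℝ) := by push_cast; rfl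
    _ = ((if V = ∅ then (1:ℤ) else 0 : ℤ) : ℝ) := by rw [h]
    _ = if V = ∅ then 1 else 0 := by split <;> simp

lemma phi_single (c₀ : Coord S) :
    (fun c' => if c' = c₀ then (1:ℝ) else 0) ∈
      Submodule.map (Phi S) (vectorSpan ℝ (PNS S)) := by
  set s : Finset S.I → ℝ := fun T => ((-1:ℝ))^c₀.1.1.card * (-1)^T.card with hs
  set u : Behaviour S := ∑ T ∈ c₀.1.1.powerset, s T • detB S (lamOf c₀ T) with hu
  have hcoef : ∑ T ∈ c₀.1.1.powerset, s T = 0 := by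
    rw [hs, ← Finset.mul_sum, sum_pow_real, if_neg (Finset.nonempty_iff_ne_empty.mp c₀.1.2),
      mul_zero]
  refine ⟨u, ?_, ?_⟩
  · set q0 : Behaviour S := detB S (lamOf c₀ ∅) with hq0
    have hrw : u = ∑ T ∈ c₀.1.1.powerset, s T • (detB S (lamOf c₀ T) -ᵥ q0) := by
      have step : ∑ T ∈ c₀.1.1.powerset, s T • (detB S (lamOf c₀ T) - q0)
          = (∑ T ∈ c₀.1.1.powerset, s T • detB S (lamOf c₀ T))
            - (∑ T ∈ c₀.1.1.powerset, s T) • q0 := by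
        rw [Finset.sum_smul, ← Finset.sum_sub_distrib]
        exact Finset.sum_congr rfl fun T _ => smul_sub _ _ _
      have : ∑ T ∈ c₀.1.1.powerset, s T • (detB S (lamOf c₀ T) - q0) = u := by
        rw [step, hcoef, zero_smul, sub_zero, hu]
      exact this.symm
    rw [hrw]
    exact Submodule.sum_mem _ fun T _ => Submodule.smul_mem _ _
      (vsub_mem_vectorSpan ℝ (detB_mem_PNS _) (detB_mem_PNS _))
  · have hmap : Phi S u = ∑ T ∈ c₀.1.1.powerset, s T • Phi S (detB S (lamOf c₀ T)) := by
      rw [hu, map_sum]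
      exact Finset.sum_congr rfl fun T _ => (Phi S).map_smul _ _
    rw [hmap]
    funext c'
    rw [Finset.sum_apply]
    have hterm : ∀ T ∈ c₀.1.1.powerset,
        (s T • Phi S (detB S (lamOf c₀ T))) c'
          = ((-1:ℝ))^c₀.1.1.card * (-1)^T.card * phiFun S (detB S (lamOf c₀ T)) c' := by
      intro T _
      rw [Pi.smul_apply, smul_eq_mul, hs]; rfl
    rw [Finset.sum_congr rfl hterm]
    exact sum_signs c₀ c'

lemma map_phi_PNS_top : Submodule.map (Phi S) (vectorSpan ℝ (PNS S)) = ⊤ := by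
  rw [eq_top_iff]
  intro w _
  have hw : w = ∑ c : Coord S, w c • (fun c' => if c' = c then (1:ℝ) else 0) := by
    funext c'
    rw [Finset.sum_apply]
    have : ∀ c : Coord S,
        (w c • (fun c'' => if c'' = c then (1:ℝ) else 0)) c'
          = if c' = c then w c else 0 := by
      intro c
      rw [Pi.smul_apply, smul_eq_mul]
      split <;> simp
    rw [Finset.sum_congr rfl (fun c _ => this c), Finset.sum_ite_eq Finset.univ c' w,
      if_pos (Finset.mem_univ c')]
  rw [hw]
  exact Submodule.sum_mem _ fun c _ => Submodule.smul_mem _ _ (phi_single c)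

lemma finrank_vs_PNS_ge :
    Fintype.card (Coord S) ≤ Module.finrank ℝ (vectorSpan ℝ (PNS S)) := by
  have h := Submodule.finrank_map_le (Phi S) (vectorSpan ℝ (PNS S))
  rw [map_phi_PNS_top] at h
  rwa [finrank_top, Module.finrank_fintype_fun_eq_card] at h

end Pironio8b
section Pironio9
open Finset

variable {S : Scenario}

lemma card_Dcoord (i : S.I) :
    Fintype.card (Dcoord S i) = ∑ x : S.M i, (Fintype.card (S.O i x) - 1) := by
  have h1 : Fintype.card (Dcoord S i)
      = Fintype.card (Σ x : S.M i, {a : S.O i x // a ≠ ostar S i x}) :=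
    Fintype.card_congr (Equiv.refl _)
  rw [h1, Fintype.card_sigma]
  refine Finset.sum_congr rfl fun x _ => ?_
  have h2 : Fintype.card {a : S.O i x // ¬ a = ostar S i x}
      = Fintype.card (S.O i x) - Fintype.card {a : S.O i x // a = ostar S i x} :=
    Fintype.card_subtype_compl _
  rw [show Fintype.card {a : S.O i x // a ≠ ostar S i x}
      = Fintype.card {a : S.O i x // ¬ a = ostar S i x} from Fintype.card_congr (Equiv.refl _)]
  rw [h2, Fintype.card_subtype_eq]

lemma card_Coord :
    Fintype.card (Coord S) =
      ∑ V ∈ Finset.univ.powerset.filter (fun V : Finset S.I => V.Nonempty),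
        ∏ i ∈ V, ∑ x : S.M i, (Fintype.card (S.O i x) - 1) := by
  have h1 : Fintype.card (Coord S)
      = ∑ VV : {V : Finset S.I // V.Nonempty},
          Fintype.card (∀ i : {i // i ∈ VV.1}, Dcoord S i.1) := by
    rw [show Fintype.card (Coord S)
        = Fintype.card (Σ VV : {V : Finset S.I // V.Nonempty},
            ∀ i : {i // i ∈ VV.1}, Dcoord S i.1) from Fintype.card_congr (Equiv.refl _),
      Fintype.card_sigma]
  have h2 : ∀ VV : {V : Finset S.I // V.Nonempty},
      Fintype.card (∀ i : {i // i ∈ VV.1}, Dcoord S i.1)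
        = ∏ i ∈ VV.1, ∑ x : S.M i, (Fintype.card (S.O i x) - 1) := by
    intro VV
    rw [Fintype.card_pi,
      ← Finset.prod_coe_sort VV.1 (fun i => ∑ x : S.M i, (Fintype.card (S.O i x) - 1))]
    exact Finset.prod_congr rfl fun i _ => card_Dcoord i.1
  rw [h1, Finset.sum_congr rfl (fun VV _ => h2 VV)]
  exact (Finset.sum_subtype (Finset.univ.powerset.filter fun V : Finset S.I => V.Nonempty)
    (fun V => by
      rw [Finset.mem_filter, Finset.mem_powerset]
      exact ⟨fun h => h.2, fun h => ⟨Finset.subset_univ V, h⟩⟩)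
    (fun V => ∏ i ∈ V, ∑ x : S.M i, (Fintype.card (S.O i x) - 1))).symm

lemma pironio_main (S : Scenario) :
    affineSpan ℝ (PNS S) = affineSpan ℝ (NSset S) ∧
    (Module.finrank ℝ (affineSpan ℝ (PNS S)).direction =
      ∑ V ∈ Finset.univ.powerset.filter (fun V : Finset S.I => V.Nonempty),
        ∏ i ∈ V, ∑ x : S.M i, (Fintype.card (S.O i x) - 1)) ∧
    (Module.finrank ℝ (affineSpan ℝ (NSset S)).direction =
      ∑ V ∈ Finset.univ.powerset.filter (fun V : Finset S.I => V.Nonempty),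
        ∏ i ∈ V, ∑ x : S.M i, (Fintype.card (S.O i x) - 1)) := by
  have hp₀ : detB S (fun i x => ostar S i x) ∈ PNS S := detB_mem_PNS _
  have hle : vectorSpan ℝ (PNS S) ≤ vectorSpan ℝ (NSset S) :=
    vectorSpan_mono ℝ PNS_subset_NS
  have h1 := finrank_vs_NS_le (S := S)
  have h2 := finrank_vs_PNS_ge (S := S)
  have h3 : Module.finrank ℝ (vectorSpan ℝ (PNS S))
      ≤ Module.finrank ℝ (vectorSpan ℝ (NSset S)) := Submodule.finrank_mono hle
  have heqP : Module.finrank ℝ (vectorSpan ℝ (PNS S)) = Fintype.card (Coord S) :=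
    le_antisymm (h3.trans h1) h2
  have heqN : Module.finrank ℝ (vectorSpan ℝ (NSset S)) = Fintype.card (Coord S) :=
    le_antisymm h1 (h2.trans h3)
  have hvseq : vectorSpan ℝ (PNS S) = vectorSpan ℝ (NSset S) :=
    Submodule.eq_of_le_of_finrank_eq hle (heqP.trans heqN.symm)
  refine ⟨?_, ?_, ?_⟩
  · apply AffineSubspace.ext_of_direction_eq
    · rw [direction_affineSpan, direction_affineSpan, hvseq]
    · exact ⟨detB S (fun i x => ostar S i x), subset_affineSpan ℝ _ hp₀,
        subset_affineSpan ℝ _ (PNS_subset_NS hp₀)⟩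
  · rw [direction_affineSpan, heqP, card_Coord]
  · rw [direction_affineSpan, heqN, card_Coord]

end Pironio9

noncomputable section

/-- **Pironio's affine hull theorem.** The affine span of the predictable no-signalling
behaviours equals the affine span of the no-signalling behaviours, and both have affine
dimension `D = ∑_{∅ ≠ V ⊆ I} ∏_{i ∈ V} (∑_{x_i ∈ M_i} (|O_{x_i}| − 1))`. -/
theorem pironio_affine_hull (S : Scenario) [Nonempty S.I] :
    affineSpan ℝ (PNS S) = affineSpan ℝ (NSset S) ∧
    (Module.finrank ℝ (affineSpan ℝ (PNS S)).direction =
      ∑ V ∈ Finset.univ.powerset.filter (fun V : Finset S.I => V.Nonempty),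
        ∏ i ∈ V, ∑ x : S.M i, (Fintype.card (S.O i x) - 1)) ∧
    (Module.finrank ℝ (affineSpan ℝ (NSset S)).direction =
      ∑ V ∈ Finset.univ.powerset.filter (fun V : Finset S.I => V.Nonempty),
        ∏ i ∈ V, ∑ x : S.M i, (Fintype.card (S.O i x) - 1)) := by
  exact pironio_main S

end
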